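/- For every ρ₀ > 0 there exists a constant c > 0, depending only on c_*, L, T and ρ₀ but not on N, such that for all t ∈ [0,T]: (1/2)·(d/dt)(‖e_u(t)‖_{K(t)}²) + (1/2)·‖e_w(t)‖_{K(t)}² ≤ (ρ₀/2)·‖e_u'(t)‖_{K(t)}² + c·‖e_u(t)‖_{K(t)}² + c·‖d_u(t)‖_{M(t)}² + c·‖d_w(t)‖_{M(t)}² + c·‖d_w(0)‖_{M(0)}². (First differential energy estimate of the stability proof, derived from the anti-symmetric testing of the error equations, Young's inequality and absorption.) -/

import Mathlib

open Matrix Set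

/-- The quadratic form `zᵀ P z` associated with a square matrix `P`. -/
def qf {N : ℕ} (P : Matrix (Fin N) (Fin N) ℝ) (z : Fin N → ℝ) : ℝ :=
  z ⬝ᵥ P.mulVec z

/-- Common hypotheses on the error equations of the semi-discrete Cahn–Hilliard-type
system: `M`, `A` are `C¹` families of matrices, `M(t)` is symmetric positive definite,
`A(t)` is symmetric positive semidefinite, the functions `e_u, e_w, d_u, d_w, F, G` are
`C¹` (with the indicated derivatives), and the two error equations hold on `[0, T]`. -/
def CHBasic {N : ℕ} (T : ℝ)
    (M A M' A' : ℝ → Matrix (Fin N) (Fin N) ℝ)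
    (eu ew eu' ew' du dw du' dw' F G F' G' : ℝ → Fin N → ℝ)
    (ϑ : Fin N → ℝ) : Prop :=
  (∀ t ∈ Icc (0:ℝ) T, ∀ (i j : Fin N), HasDerivAt (fun s => M s i j) (M' t i j) t) ∧
  (∀ t ∈ Icc (0:ℝ) T, ∀ (i j : Fin N), HasDerivAt (fun s => A s i j) (A' t i j) t) ∧
  (∀ (i j : Fin N), ContinuousOn (fun s => M' s i j) (Icc (0:ℝ) T)) ∧
  (∀ (i j : Fin N), ContinuousOn (fun s => A' s i j) (Icc (0:ℝ) T)) ∧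
  (∀ t ∈ Icc (0:ℝ) T, (M t).PosDef) ∧
  (∀ t ∈ Icc (0:ℝ) T, (A t).PosSemidef) ∧
  (∀ t ∈ Icc (0:ℝ) T, HasDerivAt eu (eu' t) t) ∧
  (∀ t ∈ Icc (0:ℝ) T, HasDerivAt ew (ew' t) t) ∧
  (∀ t ∈ Icc (0:ℝ) T, HasDerivAt du (du' t) t) ∧
  (∀ t ∈ Icc (0:ℝ) T, HasDerivAt dw (dw' t) t) ∧
  (∀ t ∈ Icc (0:ℝ) T, HasDerivAt F (F' t) t) ∧
  (∀ t ∈ Icc (0:ℝ) T, HasDerivAt G (G' t) t) ∧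
  ContinuousOn eu' (Icc (0:ℝ) T) ∧ ContinuousOn ew' (Icc (0:ℝ) T) ∧
  ContinuousOn du' (Icc (0:ℝ) T) ∧ ContinuousOn dw' (Icc (0:ℝ) T) ∧
  ContinuousOn F' (Icc (0:ℝ) T) ∧ ContinuousOn G' (Icc (0:ℝ) T) ∧
  (∀ t ∈ Icc (0:ℝ) T,
      (M t).mulVec (eu' t) + (A t).mulVec (ew t)
        = F t - (M' t).mulVec (eu t) - (M t).mulVec (du t)) ∧
  (∀ t ∈ Icc (0:ℝ) T,
      (M t).mulVec (ew t) - (A t).mulVec (eu t)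
        = G t - (M t).mulVec (dw t) + ϑ)

/-- The (semi-)norm `‖z‖_P = (zᵀ P z)^{1/2}` induced by a matrix `P`. -/
noncomputable def mnorm {N : ℕ} (P : Matrix (Fin N) (Fin N) ℝ) (z : Fin N → ℝ) : ℝ :=
  Real.sqrt (qf P z)

/-- The squared norm `‖z‖_{K}² = ‖z‖_{M}² + ‖z‖_{A}²` where `K = M + A`. -/
def kq {N : ℕ} (M A : Matrix (Fin N) (Fin N) ℝ) (z : Fin N → ℝ) : ℝ :=
  qf M z + qf A z

/-- The norm `‖z‖_{K} = (‖z‖_{M}² + ‖z‖_{A}²)^{1/2}` where `K = M + A`. -/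
noncomputable def knorm {N : ℕ} (M A : Matrix (Fin N) (Fin N) ℝ) (z : Fin N → ℝ) : ℝ :=
  Real.sqrt (kq M A z)

/-- Full hypothesis set of the stability proof: the basic error-equation setting,
the bounds `|wᵀM'(t)z| ≤ c_*‖w‖_{M(t)}‖z‖_{M(t)}`, `|wᵀA'(t)z| ≤ c_*‖w‖_{A(t)}‖z‖_{A(t)}`,
vanishing initial errors, `ϑ = M(0)d_w(0)`, and the locally-Lipschitz-type bounds on the
nonlinear differences `F`, `G` and their time derivatives. -/
def CHHyps {N : ℕ} (T cstar L : ℝ)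
    (M A M' A' : ℝ → Matrix (Fin N) (Fin N) ℝ)
    (eu ew eu' ew' du dw du' dw' F G F' G' : ℝ → Fin N → ℝ)
    (ϑ : Fin N → ℝ) : Prop :=
  CHBasic T M A M' A' eu ew eu' ew' du dw du' dw' F G F' G' ϑ ∧
  (∀ t ∈ Icc (0:ℝ) T, ∀ w z : Fin N → ℝ,
      |w ⬝ᵥ (M' t).mulVec z| ≤ cstar * mnorm (M t) w * mnorm (M t) z) ∧
  (∀ t ∈ Icc (0:ℝ) T, ∀ w z : Fin N → ℝ,
      |w ⬝ᵥ (A' t).mulVec z| ≤ cstar * mnorm (A t) w * mnorm (A t) z) ∧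
  eu 0 = 0 ∧ ew 0 = 0 ∧ ϑ = (M 0).mulVec (dw 0) ∧
  (∀ t ∈ Icc (0:ℝ) T, ∀ v : Fin N → ℝ,
      |v ⬝ᵥ F t| ≤ L * mnorm (M t) v * knorm (M t) (A t) (eu t)) ∧
  (∀ t ∈ Icc (0:ℝ) T, ∀ v : Fin N → ℝ,
      |v ⬝ᵥ G t| ≤ L * mnorm (M t) v * knorm (M t) (A t) (eu t)) ∧
  (∀ t ∈ Icc (0:ℝ) T, ∀ v : Fin N → ℝ,
      |v ⬝ᵥ F' t| ≤ L * mnorm (M t) v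
        * (knorm (M t) (A t) (eu t) + knorm (M t) (A t) (eu' t))) ∧
  (∀ t ∈ Icc (0:ℝ) T, ∀ v : Fin N → ℝ,
      |v ⬝ᵥ G' t| ≤ L * mnorm (M t) v
        * (knorm (M t) (A t) (eu t) + knorm (M t) (A t) (eu' t)))

lemma qf_nonneg {N : ℕ} {P : Matrix (Fin N) (Fin N) ℝ} (hP : P.PosSemidef)
    (z : Fin N → ℝ) : 0 ≤ qf P z := by
  simpa [qf] using hP.dotProduct_mulVec_nonneg z

lemma dot_symm {N : ℕ} {P : Matrix (Fin N) (Fin N) ℝ} (hP : P.IsHermitian)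
    (x y : Fin N → ℝ) : x ⬝ᵥ P.mulVec y = y ⬝ᵥ P.mulVec x := by
  have hPt : Pᵀ = P := by
    rw [Matrix.IsHermitian, Matrix.conjTranspose_eq_transpose_of_trivial] at hP
    exact hP
  rw [Matrix.dotProduct_mulVec, ← Matrix.mulVec_transpose, hPt, dotProduct_comm]

lemma cs {N : ℕ} {P : Matrix (Fin N) (Fin N) ℝ} (hP : P.PosSemidef)
    (x y : Fin N → ℝ) : |x ⬝ᵥ P.mulVec y| ≤ mnorm P x * mnorm P y := by
  have hsym := dot_symm hP.isHermitian x y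
  have hq : ∀ lam : ℝ, 0 ≤ qf P y * (lam * lam) + (2 * (x ⬝ᵥ P.mulVec y)) * lam + qf P x := by
    intro lam
    have h := qf_nonneg hP (x + lam • y)
    have hexp : qf P (x + lam • y)
        = qf P y * (lam * lam) + (2 * (x ⬝ᵥ P.mulVec y)) * lam + qf P x := by
      simp only [qf, Matrix.mulVec_add, Matrix.mulVec_smul, dotProduct_add,
        add_dotProduct, smul_dotProduct, dotProduct_smul,
        smul_eq_mul]
      rw [dot_symm hP.isHermitian y x]
      ring
    linarith [hexp ▸ h]
  have hd := discrim_le_zero hq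
  have key : (x ⬝ᵥ P.mulVec y) ^ 2 ≤ qf P x * qf P y := by
    rw [discrim] at hd
    nlinarith [hd]
  have h1 : |x ⬝ᵥ P.mulVec y| = Real.sqrt ((x ⬝ᵥ P.mulVec y) ^ 2) :=
    (Real.sqrt_sq_eq_abs _).symm
  rw [h1, mnorm, mnorm, ← Real.sqrt_mul (qf_nonneg hP x)]
  exact Real.sqrt_le_sqrt key

lemma young (ε a b : ℝ) (hε : 0 < ε) : a * b ≤ ε * a ^ 2 + b ^ 2 / (4 * ε) := by
  rw [← sub_nonneg]
  have h4 : (4 * ε) ≠ 0 := by positivity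
  have key : ε * a ^ 2 + b ^ 2 / (4 * ε) - a * b = (2 * ε * a - b) ^ 2 / (4 * ε) := by
    field_simp
    ring
  rw [key]
  positivity

lemma absorb {X a b ε κ : ℝ} (hε : 0 < ε) (hκ : 4 * ε * κ = 1) (hX : |X| ≤ a * b) :
    |X| ≤ ε * a ^ 2 + κ * b ^ 2 := by
  have hy := young ε a b hε
  have h4 : (4 * ε) ≠ 0 := by positivity
  have hκ' : κ = 1 / (4 * ε) := by field_simp; linarith
  calc |X| ≤ a * b := hX
    _ ≤ ε * a ^ 2 + b ^ 2 / (4 * ε) := hy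
    _ = ε * a ^ 2 + κ * b ^ 2 := by rw [hκ']; ring

lemma sbound {X C q1 q2 ε κ : ℝ} (hε : 0 < ε) (hκ : 4 * ε * κ = 1)
    (h1 : 0 ≤ q1) (h2 : 0 ≤ q2)
    (hX : |X| ≤ C * Real.sqrt q1 * Real.sqrt q2) :
    |X| ≤ ε * q1 + κ * C ^ 2 * q2 := by
  have hX' : |X| ≤ Real.sqrt q1 * (C * Real.sqrt q2) := by
    calc |X| ≤ C * Real.sqrt q1 * Real.sqrt q2 := hX
      _ = Real.sqrt q1 * (C * Real.sqrt q2) := by ring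
  have h := absorb hε hκ hX'
  calc |X| ≤ ε * (Real.sqrt q1) ^ 2 + κ * (C * Real.sqrt q2) ^ 2 := h
    _ = ε * q1 + κ * C ^ 2 * q2 := by
        rw [Real.sq_sqrt h1, mul_pow, Real.sq_sqrt h2]; ring

lemma hasDerivAt_qf {N : ℕ} {M M' : ℝ → Matrix (Fin N) (Fin N) ℝ}
    {z : ℝ → Fin N → ℝ} {zt' : Fin N → ℝ} {t : ℝ}
    (hM : ∀ i j, HasDerivAt (fun s => M s i j) (M' t i j) t)
    (hz : HasDerivAt z zt' t) :
    HasDerivAt (fun s => qf (M s) (z s))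
      (zt' ⬝ᵥ (M t).mulVec (z t) + z t ⬝ᵥ (M' t).mulVec (z t)
        + z t ⬝ᵥ (M t).mulVec zt') t := by
  have hzi : ∀ i, HasDerivAt (fun s => z s i) (zt' i) t := fun i => hasDerivAt_pi.mp hz i
  have key : HasDerivAt (fun s => ∑ i, z s i * ∑ j, M s i j * z s j)
      (∑ i, (zt' i * ∑ j, M t i j * z t j
        + z t i * ∑ j, (M' t i j * z t j + M t i j * zt' j))) t := by
    apply HasDerivAt.fun_sum
    intro i _
    have hin : HasDerivAt (fun s => ∑ j, M s i j * z s j)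
        (∑ j, (M' t i j * z t j + M t i j * zt' j)) t :=
      HasDerivAt.fun_sum fun j _ => (hM i j).mul (hzi j)
    exact (hzi i).mul hin
  have hval : zt' ⬝ᵥ (M t).mulVec (z t) + z t ⬝ᵥ (M' t).mulVec (z t)
        + z t ⬝ᵥ (M t).mulVec zt'
      = ∑ i, (zt' i * ∑ j, M t i j * z t j
        + z t i * ∑ j, (M' t i j * z t j + M t i j * zt' j)) := by
    simp only [dotProduct, Matrix.mulVec, Finset.sum_add_distrib, mul_add]
    ring
  have hfun : (fun s => qf (M s) (z s)) = fun s => ∑ i, z s i * ∑ j, M s i j * z s j := by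
    funext s
    simp [qf, dotProduct, Matrix.mulVec]
  rw [hfun, hval]
  exact key

lemma gron {N : ℕ} {T cstar : ℝ} (hcs : 0 ≤ cstar)
    {M M' : ℝ → Matrix (Fin N) (Fin N) ℝ}
    (hder : ∀ t ∈ Icc (0:ℝ) T, ∀ i j, HasDerivAt (fun s => M s i j) (M' t i j) t)
    (hpsd : ∀ t ∈ Icc (0:ℝ) T, (M t).PosSemidef)
    (hb : ∀ t ∈ Icc (0:ℝ) T, ∀ w z : Fin N → ℝ,
      |w ⬝ᵥ (M' t).mulVec z| ≤ cstar * mnorm (M t) w * mnorm (M t) z)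
    (z : Fin N → ℝ) {t : ℝ} (ht : t ∈ Icc (0:ℝ) T) :
    qf (M 0) z ≤ Real.exp (cstar * T) * qf (M t) z := by
  set h : ℝ → ℝ := fun s => Real.exp (cstar * s) * qf (M s) z with hh
  have hderq : ∀ s ∈ Icc (0:ℝ) T, HasDerivAt (fun r => qf (M r) z)
      (z ⬝ᵥ (M' s).mulVec z) s := by
    intro s hs
    have := hasDerivAt_qf (hder s hs) (hasDerivAt_const s z)
    simpa using this
  have hderh : ∀ s ∈ Icc (0:ℝ) T, HasDerivAt h
      (cstar * Real.exp (cstar * s) * qf (M s) z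
        + Real.exp (cstar * s) * (z ⬝ᵥ (M' s).mulVec z)) s := by
    intro s hs
    have he : HasDerivAt (fun r : ℝ => Real.exp (cstar * r))
        (Real.exp (cstar * s) * cstar) s :=
      by simpa using ((hasDerivAt_id s).const_mul cstar).exp
    have := he.mul (hderq s hs)
    exact this.congr_deriv (by ring)
  have ht0 : 0 ≤ t := ht.1
  have hsub : Icc (0:ℝ) t ⊆ Icc 0 T := Icc_subset_Icc le_rfl ht.2
  have hsub' : interior (Icc (0:ℝ) t) ⊆ Icc 0 T := interior_subset.trans hsub
  have mono : MonotoneOn h (Icc 0 t) := by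
    apply monotoneOn_of_deriv_nonneg (convex_Icc _ _)
    · exact fun s hs => ((hderh s (hsub hs)).continuousAt).continuousWithinAt
    · exact fun s hs => ((hderh s (hsub' hs)).differentiableAt).differentiableWithinAt
    · intro s hs
      rw [(hderh s (hsub' hs)).deriv]
      have hq := qf_nonneg (hpsd s (hsub' hs)) z
      have hb' := hb s (hsub' hs) z z
      have hmm : cstar * mnorm (M s) z * mnorm (M s) z = cstar * qf (M s) z := by
        rw [mul_assoc, mnorm, Real.mul_self_sqrt hq]
      rw [hmm] at hb'
      have hexp := Real.exp_pos (cstar * s)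
      nlinarith [abs_le.mp hb', hexp.le, mul_nonneg hcs hq]
  have h0t : h 0 ≤ h t := mono (left_mem_Icc.mpr ht0) (right_mem_Icc.mpr ht0) ht0
  have h0 : h 0 = qf (M 0) z := by simp [hh]
  have hqt := qf_nonneg (hpsd t ht) z
  have hle : Real.exp (cstar * t) ≤ Real.exp (cstar * T) :=
    Real.exp_le_exp.mpr (mul_le_mul_of_nonneg_left ht.2 hcs)
  calc qf (M 0) z = h 0 := h0.symm
    _ ≤ h t := h0t
    _ = Real.exp (cstar * t) * qf (M t) z := rfl
    _ ≤ Real.exp (cstar * T) * qf (M t) z := mul_le_mul_of_nonneg_right hle hqt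

set_option maxHeartbeats 1000000

/-- First differential energy estimate of the stability proof: for every `ρ₀ > 0` there
is `c > 0` (depending only on `c_*`, `L`, `T`, `ρ₀`, and in particular not on `N`) with
`(1/2)·(d/dt)(‖e_u‖_{K(t)}²) + (1/2)·‖e_w‖_{K(t)}²
  ≤ (ρ₀/2)·‖e_u'‖_{K(t)}² + c·‖e_u‖_{K(t)}² + c·‖d_u‖_{M(t)}² + c·‖d_w‖_{M(t)}²
    + c·‖d_w(0)‖_{M(0)}²` on `[0,T]`. -/
theorem stmt4 (cstar L T ρ₀ : ℝ)
    (hcstar : 0 < cstar) (hL : 0 < L) (hT : 0 < T) (hρ₀ : 0 < ρ₀) :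
    ∃ c > (0:ℝ), ∀ (N : ℕ), 1 ≤ N →
      ∀ (M A M' A' : ℝ → Matrix (Fin N) (Fin N) ℝ)
        (eu ew eu' ew' du dw du' dw' F G F' G' : ℝ → Fin N → ℝ)
        (ϑ : Fin N → ℝ),
        CHHyps T cstar L M A M' A' eu ew eu' ew' du dw du' dw' F G F' G' ϑ →
        ∀ t ∈ Icc (0:ℝ) T,
          (1/2) * deriv (fun s => kq (M s) (A s) (eu s)) t
              + (1/2) * kq (M t) (A t) (ew t)
            ≤ (ρ₀/2) * kq (M t) (A t) (eu' t)
              + c * kq (M t) (A t) (eu t)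
              + c * qf (M t) (du t) + c * qf (M t) (dw t)
              + c * qf (M 0) (dw 0) := by
  have hK2pos : (0:ℝ) < Real.exp (cstar * T) := Real.exp_pos _
  have hK2one : (1:ℝ) ≤ Real.exp (cstar * T) := Real.one_le_exp (mul_nonneg hcstar.le hT.le)
  obtain ⟨K2, hK2def⟩ : ∃ K2, K2 = Real.exp (cstar * T) := ⟨_, rfl⟩
  rw [← hK2def] at hK2pos hK2one
  obtain ⟨B, hBdef⟩ : ∃ B, B = 1 + L + cstar + K2 := ⟨_, rfl⟩
  have hB1 : 1 ≤ B := by rw [hBdef]; linarith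
  have hB0 : (0:ℝ) < B := by linarith
  have hρ : ρ₀ ≠ 0 := ne_of_gt hρ₀
  obtain ⟨c, hcdef⟩ : ∃ c, c = B^2 * (12 + 2/ρ₀) := ⟨_, rfl⟩
  have hcpos : (0:ℝ) < c := by rw [hcdef]; positivity
  refine ⟨c, hcpos, ?_⟩
  have hBB : B ≤ B^2 := by nlinarith [hB1, hB0]
  have h1B2 : (1:ℝ) ≤ B^2 := hB1.trans hBB
  have hLB2 : L ≤ B^2 := by rw [hBdef] at hBB ⊢; nlinarith [hK2pos, hcstar]
  have hcB2 : cstar ≤ B^2 := by rw [hBdef] at hBB ⊢; nlinarith [hK2pos, hL]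
  have hK2B2 : K2 ≤ B^2 := by rw [hBdef] at hBB ⊢; nlinarith [hL, hcstar]
  have hL2 : L^2 ≤ B^2 := pow_le_pow_left₀ hL.le (by rw [hBdef]; linarith) 2
  have hc2 : cstar^2 ≤ B^2 := pow_le_pow_left₀ hcstar.le (by rw [hBdef]; linarith) 2
  have hfrac : 3/(2*ρ₀) ≤ 2/ρ₀ := by
    rw [div_le_div_iff₀ (by positivity) (by positivity)]; nlinarith
  have hBpos2 : (0:ℝ) ≤ B^2 := by positivity
  have hfr0 : (0:ℝ) ≤ 3/(2*ρ₀) := by positivity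
  have hdiv1 : 3/(2*ρ₀)*L^2 ≤ 2/ρ₀*B^2 :=
    (mul_le_mul_of_nonneg_left hL2 hfr0).trans (mul_le_mul_of_nonneg_right hfrac hBpos2)
  have hdiv2 : 3/(2*ρ₀)*K2 ≤ 2/ρ₀*B^2 :=
    (mul_le_mul_of_nonneg_left hK2B2 hfr0).trans (mul_le_mul_of_nonneg_right hfrac hBpos2)
  have hdiv3 : (0:ℝ) ≤ 2/ρ₀*B^2 := by positivity
  have hdiv4 : 3/(2*ρ₀) ≤ 2/ρ₀*B^2 := by
    calc 3/(2*ρ₀) = 3/(2*ρ₀)*1 := by ring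
      _ ≤ 3/(2*ρ₀)*B^2 := mul_le_mul_of_nonneg_left h1B2 hfr0
      _ ≤ 2/ρ₀*B^2 := mul_le_mul_of_nonneg_right hfrac hBpos2
  have key1 : L + cstar + 1/2 + 6*L^2 + 3*cstar^2 + 3/(2*ρ₀)*L^2 ≤ c := by
    rw [hcdef]
    have : B^2*(12+2/ρ₀) = 12*B^2 + 2/ρ₀*B^2 := by ring
    linarith [hLB2, hcB2, h1B2, hL2, hc2, hdiv1]
  have key2 : (7:ℝ)/2 ≤ c := by
    rw [hcdef]
    have : B^2*(12+2/ρ₀) = 12*B^2 + 2/ρ₀*B^2 := by ring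
    linarith [h1B2, hdiv3]
  have key3 : 3 + 3/(2*ρ₀) ≤ c := by
    rw [hcdef]
    have : B^2*(12+2/ρ₀) = 12*B^2 + 2/ρ₀*B^2 := by ring
    linarith [h1B2, hdiv4]
  have key4 : 3*K2 + 3/(2*ρ₀)*K2 ≤ c := by
    rw [hcdef]
    have : B^2*(12+2/ρ₀) = 12*B^2 + 2/ρ₀*B^2 := by ring
    linarith [hK2B2, hdiv2, h1B2]
  intro N hN M A M' A' eu ew eu' ew' du dw du' dw' F G F' G' ϑ hyp t ht
  obtain ⟨⟨hM, hA, hMc, hAc, hMpd, hApsd, heu, hew, hdu, hdw, hF, hG, hcA, hcB, hcC,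
    hcD, hcE, hcF, heq1, heq2⟩, hM'b, hA'b, heu0, hew0, hϑ, hFb, hGb, hF'b, hG'b⟩ := hyp
  subst hϑ
  have h0T : (0:ℝ) ∈ Icc (0:ℝ) T := ⟨le_rfl, hT.le⟩
  have hMsd : ∀ s ∈ Icc (0:ℝ) T, (M s).PosSemidef := fun s hs => (hMpd s hs).posSemidef
  -- nonnegativity
  have hMu : 0 ≤ eu t ⬝ᵥ (M t).mulVec (eu t) := qf_nonneg (hMsd t ht) _
  have hAu : 0 ≤ eu t ⬝ᵥ (A t).mulVec (eu t) := qf_nonneg (hApsd t ht) _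
  have hMw : 0 ≤ ew t ⬝ᵥ (M t).mulVec (ew t) := qf_nonneg (hMsd t ht) _
  have hAw : 0 ≤ ew t ⬝ᵥ (A t).mulVec (ew t) := qf_nonneg (hApsd t ht) _
  have hMp : 0 ≤ eu' t ⬝ᵥ (M t).mulVec (eu' t) := qf_nonneg (hMsd t ht) _
  have hAp : 0 ≤ eu' t ⬝ᵥ (A t).mulVec (eu' t) := qf_nonneg (hApsd t ht) _
  have hDU : 0 ≤ du t ⬝ᵥ (M t).mulVec (du t) := qf_nonneg (hMsd t ht) _
  have hDW : 0 ≤ dw t ⬝ᵥ (M t).mulVec (dw t) := qf_nonneg (hMsd t ht) _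
  have hD0 : 0 ≤ dw 0 ⬝ᵥ (M 0).mulVec (dw 0) := qf_nonneg (hMsd 0 h0T) _
  have hU : 0 ≤ (eu t ⬝ᵥ (M t).mulVec (eu t) + eu t ⬝ᵥ (A t).mulVec (eu t)) := add_nonneg hMu hAu
  -- derivative of the squared K-norm
  have hDer : HasDerivAt (fun s => kq (M s) (A s) (eu s))
      (eu' t ⬝ᵥ (M t).mulVec (eu t) + eu t ⬝ᵥ (M' t).mulVec (eu t)
        + eu t ⬝ᵥ (M t).mulVec (eu' t)
        + (eu' t ⬝ᵥ (A t).mulVec (eu t) + eu t ⬝ᵥ (A' t).mulVec (eu t)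
        + eu t ⬝ᵥ (A t).mulVec (eu' t))) t :=
    (hasDerivAt_qf (hM t ht) (heu t ht)).add (hasDerivAt_qf (hA t ht) (heu t ht))
  have hD := hDer.deriv
  -- tested error equations
  have e1 := congrArg (fun y => eu t ⬝ᵥ y) (heq1 t ht)
  have e2 := congrArg (fun y => ew t ⬝ᵥ y) (heq1 t ht)
  have e3 := congrArg (fun y => ew t ⬝ᵥ y) (heq2 t ht)
  have e4 := congrArg (fun y => eu' t ⬝ᵥ y) (heq2 t ht)
  simp only [dotProduct_add, dotProduct_sub] at e1 e2 e3 e4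
  -- symmetry
  have s1 : eu t ⬝ᵥ (M t).mulVec (eu' t) = eu' t ⬝ᵥ (M t).mulVec (eu t) :=
    dot_symm (hMpd t ht).1 _ _
  have s2 : ew t ⬝ᵥ (M t).mulVec (eu' t) = eu' t ⬝ᵥ (M t).mulVec (ew t) :=
    dot_symm (hMpd t ht).1 _ _
  have s3 : eu t ⬝ᵥ (A t).mulVec (ew t) = ew t ⬝ᵥ (A t).mulVec (eu t) :=
    dot_symm (hApsd t ht).1 _ _
  have s4 : eu t ⬝ᵥ (A t).mulVec (eu' t) = eu' t ⬝ᵥ (A t).mulVec (eu t) :=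
    dot_symm (hApsd t ht).1 _ _
  -- bounds on the thirteen cross terms
  have hb1 : |eu t ⬝ᵥ F t| ≤ L * (eu t ⬝ᵥ (M t).mulVec (eu t) + eu t ⬝ᵥ (A t).mulVec (eu t)) := by
    have h := hFb t ht (eu t)
    unfold mnorm knorm kq qf at h
    have hmono : Real.sqrt (eu t ⬝ᵥ (M t).mulVec (eu t)) ≤ Real.sqrt (eu t ⬝ᵥ (M t).mulVec (eu t) + eu t ⬝ᵥ (A t).mulVec (eu t)) := Real.sqrt_le_sqrt (by linarith only [hAu])
    calc |eu t ⬝ᵥ F t| ≤ L * Real.sqrt (eu t ⬝ᵥ (M t).mulVec (eu t)) * Real.sqrt (eu t ⬝ᵥ (M t).mulVec (eu t) + eu t ⬝ᵥ (A t).mulVec (eu t)) := h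
      _ ≤ L * Real.sqrt (eu t ⬝ᵥ (M t).mulVec (eu t) + eu t ⬝ᵥ (A t).mulVec (eu t)) * Real.sqrt (eu t ⬝ᵥ (M t).mulVec (eu t) + eu t ⬝ᵥ (A t).mulVec (eu t)) :=
          mul_le_mul_of_nonneg_right (mul_le_mul_of_nonneg_left hmono hL.le)
            (Real.sqrt_nonneg _)
      _ = L * (eu t ⬝ᵥ (M t).mulVec (eu t) + eu t ⬝ᵥ (A t).mulVec (eu t)) := by rw [mul_assoc, Real.mul_self_sqrt hU]
  have hb2 : |eu t ⬝ᵥ (M' t).mulVec (eu t)| ≤ cstar * (eu t ⬝ᵥ (M t).mulVec (eu t) + eu t ⬝ᵥ (A t).mulVec (eu t)) := by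
    have h := hM'b t ht (eu t) (eu t)
    unfold mnorm qf at h
    rw [mul_assoc, Real.mul_self_sqrt hMu] at h
    nlinarith only [h, mul_nonneg hcstar.le hAu]
  have hb3 : |eu t ⬝ᵥ (A' t).mulVec (eu t)| ≤ cstar * (eu t ⬝ᵥ (M t).mulVec (eu t) + eu t ⬝ᵥ (A t).mulVec (eu t)) := by
    have h := hA'b t ht (eu t) (eu t)
    unfold mnorm qf at h
    rw [mul_assoc, Real.mul_self_sqrt hAu] at h
    nlinarith only [h, mul_nonneg hcstar.le hMu]
  have hb4 : |eu t ⬝ᵥ (M t).mulVec (du t)|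
      ≤ 1/2 * (eu t ⬝ᵥ (M t).mulVec (eu t)) + 1/2 * 1^2 * (du t ⬝ᵥ (M t).mulVec (du t)) := by
    have h := cs (hMsd t ht) (eu t) (du t)
    unfold mnorm qf at h
    have h1 : |eu t ⬝ᵥ (M t).mulVec (du t)|
        ≤ 1 * Real.sqrt (eu t ⬝ᵥ (M t).mulVec (eu t)) * Real.sqrt (du t ⬝ᵥ (M t).mulVec (du t)) := by rw [one_mul]; exact h
    exact sbound one_half_pos (by norm_num) hMu hDU h1
  have hb5 : |ew t ⬝ᵥ F t| ≤ 1/12 * (ew t ⬝ᵥ (M t).mulVec (ew t)) + 3 * L^2 * (eu t ⬝ᵥ (M t).mulVec (eu t) + eu t ⬝ᵥ (A t).mulVec (eu t)) := by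
    have h := hFb t ht (ew t)
    unfold mnorm knorm kq qf at h
    exact sbound (by norm_num) (by norm_num) hMw hU h
  have hb6 : |ew t ⬝ᵥ G t| ≤ 1/12 * (ew t ⬝ᵥ (M t).mulVec (ew t)) + 3 * L^2 * (eu t ⬝ᵥ (M t).mulVec (eu t) + eu t ⬝ᵥ (A t).mulVec (eu t)) := by
    have h := hGb t ht (ew t)
    unfold mnorm knorm kq qf at h
    exact sbound (by norm_num) (by norm_num) hMw hU h
  have hb7 : |ew t ⬝ᵥ (M' t).mulVec (eu t)|
      ≤ 1/12 * (ew t ⬝ᵥ (M t).mulVec (ew t)) + 3 * cstar^2 * (eu t ⬝ᵥ (M t).mulVec (eu t)) := by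
    have h := hM'b t ht (ew t) (eu t)
    unfold mnorm qf at h
    exact sbound (by norm_num) (by norm_num) hMw hMu h
  have hb8 : |ew t ⬝ᵥ (M t).mulVec (du t)|
      ≤ 1/12 * (ew t ⬝ᵥ (M t).mulVec (ew t)) + 3 * 1^2 * (du t ⬝ᵥ (M t).mulVec (du t)) := by
    have h := cs (hMsd t ht) (ew t) (du t)
    unfold mnorm qf at h
    have h1 : |ew t ⬝ᵥ (M t).mulVec (du t)|
        ≤ 1 * Real.sqrt (ew t ⬝ᵥ (M t).mulVec (ew t)) * Real.sqrt (du t ⬝ᵥ (M t).mulVec (du t)) := by rw [one_mul]; exact h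
    exact sbound (by norm_num) (by norm_num) hMw hDU h1
  have hb9 : |ew t ⬝ᵥ (M t).mulVec (dw t)|
      ≤ 1/12 * (ew t ⬝ᵥ (M t).mulVec (ew t)) + 3 * 1^2 * (dw t ⬝ᵥ (M t).mulVec (dw t)) := by
    have h := cs (hMsd t ht) (ew t) (dw t)
    unfold mnorm qf at h
    have h1 : |ew t ⬝ᵥ (M t).mulVec (dw t)|
        ≤ 1 * Real.sqrt (ew t ⬝ᵥ (M t).mulVec (ew t)) * Real.sqrt (dw t ⬝ᵥ (M t).mulVec (dw t)) := by rw [one_mul]; exact h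
    exact sbound (by norm_num) (by norm_num) hMw hDW h1
  -- Gronwall-type norm equivalence in time
  have hgrw : ew t ⬝ᵥ (M 0).mulVec (ew t) ≤ K2 * (ew t ⬝ᵥ (M t).mulVec (ew t)) := by
    rw [hK2def]; exact gron hcstar.le hM hMsd hM'b (ew t) ht
  have hgrp : eu' t ⬝ᵥ (M 0).mulVec (eu' t) ≤ K2 * (eu' t ⬝ᵥ (M t).mulVec (eu' t)) := by
    rw [hK2def]; exact gron hcstar.le hM hMsd hM'b (eu' t) ht
  have hb10 : |ew t ⬝ᵥ (M 0).mulVec (dw 0)|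
      ≤ 1/12 * (ew t ⬝ᵥ (M t).mulVec (ew t)) + 3 * 1^2 * (K2 * (dw 0 ⬝ᵥ (M 0).mulVec (dw 0))) := by
    have h := cs (hMsd 0 h0T) (ew t) (dw 0)
    unfold mnorm qf at h
    have hmono : Real.sqrt (ew t ⬝ᵥ (M 0).mulVec (ew t))
        ≤ Real.sqrt (K2 * (ew t ⬝ᵥ (M t).mulVec (ew t))) := Real.sqrt_le_sqrt hgrw
    have h2 : Real.sqrt (K2 * (ew t ⬝ᵥ (M t).mulVec (ew t))) * Real.sqrt (dw 0 ⬝ᵥ (M 0).mulVec (dw 0))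
        = Real.sqrt (ew t ⬝ᵥ (M t).mulVec (ew t)) * Real.sqrt (K2 * (dw 0 ⬝ᵥ (M 0).mulVec (dw 0))) := by
      rw [Real.sqrt_mul hK2pos.le, Real.sqrt_mul hK2pos.le]; ring
    have h1 : |ew t ⬝ᵥ (M 0).mulVec (dw 0)|
        ≤ 1 * Real.sqrt (ew t ⬝ᵥ (M t).mulVec (ew t)) * Real.sqrt (K2 * (dw 0 ⬝ᵥ (M 0).mulVec (dw 0))) := by
      rw [one_mul, ← h2]
      exact h.trans (mul_le_mul_of_nonneg_right hmono (Real.sqrt_nonneg _))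
    exact sbound (by norm_num) (by norm_num) hMw (mul_nonneg hK2pos.le hD0) h1
  have hb11 : |eu' t ⬝ᵥ G t| ≤ ρ₀/6 * (eu' t ⬝ᵥ (M t).mulVec (eu' t)) + 3/(2*ρ₀) * L^2 * (eu t ⬝ᵥ (M t).mulVec (eu t) + eu t ⬝ᵥ (A t).mulVec (eu t)) := by
    have h := hGb t ht (eu' t)
    unfold mnorm knorm kq qf at h
    exact sbound (by positivity) (by field_simp; ring) hMp hU h
  have hb12 : |eu' t ⬝ᵥ (M t).mulVec (dw t)|
      ≤ ρ₀/6 * (eu' t ⬝ᵥ (M t).mulVec (eu' t)) + 3/(2*ρ₀) * 1^2 * (dw t ⬝ᵥ (M t).mulVec (dw t)) := by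
    have h := cs (hMsd t ht) (eu' t) (dw t)
    unfold mnorm qf at h
    have h1 : |eu' t ⬝ᵥ (M t).mulVec (dw t)|
        ≤ 1 * Real.sqrt (eu' t ⬝ᵥ (M t).mulVec (eu' t)) * Real.sqrt (dw t ⬝ᵥ (M t).mulVec (dw t)) := by rw [one_mul]; exact h
    exact sbound (by positivity) (by field_simp; ring) hMp hDW h1
  have hb13 : |eu' t ⬝ᵥ (M 0).mulVec (dw 0)|
      ≤ ρ₀/6 * (eu' t ⬝ᵥ (M t).mulVec (eu' t)) + 3/(2*ρ₀) * 1^2 * (K2 * (dw 0 ⬝ᵥ (M 0).mulVec (dw 0))) := by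
    have h := cs (hMsd 0 h0T) (eu' t) (dw 0)
    unfold mnorm qf at h
    have hmono : Real.sqrt (eu' t ⬝ᵥ (M 0).mulVec (eu' t))
        ≤ Real.sqrt (K2 * (eu' t ⬝ᵥ (M t).mulVec (eu' t))) := Real.sqrt_le_sqrt hgrp
    have h2 : Real.sqrt (K2 * (eu' t ⬝ᵥ (M t).mulVec (eu' t))) * Real.sqrt (dw 0 ⬝ᵥ (M 0).mulVec (dw 0))
        = Real.sqrt (eu' t ⬝ᵥ (M t).mulVec (eu' t)) * Real.sqrt (K2 * (dw 0 ⬝ᵥ (M 0).mulVec (dw 0))) := by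
      rw [Real.sqrt_mul hK2pos.le, Real.sqrt_mul hK2pos.le]; ring
    have h1 : |eu' t ⬝ᵥ (M 0).mulVec (dw 0)|
        ≤ 1 * Real.sqrt (eu' t ⬝ᵥ (M t).mulVec (eu' t)) * Real.sqrt (K2 * (dw 0 ⬝ᵥ (M 0).mulVec (dw 0))) := by
      rw [one_mul, ← h2]
      exact h.trans (mul_le_mul_of_nonneg_right hmono (Real.sqrt_nonneg _))
    exact sbound (by positivity) (by field_simp; ring) hMp (mul_nonneg hK2pos.le hD0) h1
  have nn1 : 0 ≤ cstar^2 * (eu t ⬝ᵥ (A t).mulVec (eu t)) := mul_nonneg (by positivity) hAu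
  have nn2 : 0 ≤ ρ₀ * (eu' t ⬝ᵥ (A t).mulVec (eu' t)) := mul_nonneg hρ₀.le hAp
  -- coefficient facts
  have cf1 : (L + cstar + 1/2 + 6*L^2 + 3*cstar^2 + 3/(2*ρ₀)*L^2) * (eu t ⬝ᵥ (M t).mulVec (eu t) + eu t ⬝ᵥ (A t).mulVec (eu t)) ≤ c * (eu t ⬝ᵥ (M t).mulVec (eu t) + eu t ⬝ᵥ (A t).mulVec (eu t)) :=
    mul_le_mul_of_nonneg_right key1 hU
  have cf2 : (7:ℝ)/2 * (du t ⬝ᵥ (M t).mulVec (du t)) ≤ c * (du t ⬝ᵥ (M t).mulVec (du t)) := mul_le_mul_of_nonneg_right key2 hDU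
  have cf3 : (3 + 3/(2*ρ₀)) * (dw t ⬝ᵥ (M t).mulVec (dw t)) ≤ c * (dw t ⬝ᵥ (M t).mulVec (dw t)) := mul_le_mul_of_nonneg_right key3 hDW
  have cf4 : (3*K2 + 3/(2*ρ₀)*K2) * (dw 0 ⬝ᵥ (M 0).mulVec (dw 0)) ≤ c * (dw 0 ⬝ᵥ (M 0).mulVec (dw 0)) :=
    mul_le_mul_of_nonneg_right key4 hD0
  -- the energy identity obtained by antisymmetric testing
  have hid : 1/2 * deriv (fun s => kq (M s) (A s) (eu s)) t + 1/2 * (ew t ⬝ᵥ (M t).mulVec (ew t) + ew t ⬝ᵥ (A t).mulVec (ew t))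
      = (eu t ⬝ᵥ F t - 1/2 * (eu t ⬝ᵥ (M' t).mulVec (eu t))
        + 1/2 * (eu t ⬝ᵥ (A' t).mulVec (eu t)) - eu t ⬝ᵥ (M t).mulVec (du t))
        + (ew t ⬝ᵥ F t + ew t ⬝ᵥ G t - ew t ⬝ᵥ (M' t).mulVec (eu t)
        - ew t ⬝ᵥ (M t).mulVec (du t) - ew t ⬝ᵥ (M t).mulVec (dw t)
        + ew t ⬝ᵥ (M 0).mulVec (dw 0))
        + (- (eu' t ⬝ᵥ G t) + eu' t ⬝ᵥ (M t).mulVec (dw t)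
        - eu' t ⬝ᵥ (M 0).mulVec (dw 0))
        + (- (1/2) * (ew t ⬝ᵥ (M t).mulVec (ew t)) - (1/2) * (ew t ⬝ᵥ (A t).mulVec (ew t))) := by
    linear_combination (1/2)*hD + e1 + e2 + e3 - e4 - (1/2)*s1 - s2 - s3 + (1/2)*s4
  -- grouped estimates
  have GB1 : (eu t ⬝ᵥ F t - 1/2 * (eu t ⬝ᵥ (M' t).mulVec (eu t))
        + 1/2 * (eu t ⬝ᵥ (A' t).mulVec (eu t)) - eu t ⬝ᵥ (M t).mulVec (du t))
      ≤ (L + cstar + 1/2) * (eu t ⬝ᵥ (M t).mulVec (eu t) + eu t ⬝ᵥ (A t).mulVec (eu t)) + 1/2 * (du t ⬝ᵥ (M t).mulVec (du t)) := by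
    linarith only [(abs_le.mp hb1).1, (abs_le.mp hb1).2, (abs_le.mp hb2).1, (abs_le.mp hb2).2,
      (abs_le.mp hb3).1, (abs_le.mp hb3).2, (abs_le.mp hb4).1, (abs_le.mp hb4).2, hAu]
  have GB2 : (ew t ⬝ᵥ F t + ew t ⬝ᵥ G t - ew t ⬝ᵥ (M' t).mulVec (eu t)
        - ew t ⬝ᵥ (M t).mulVec (du t) - ew t ⬝ᵥ (M t).mulVec (dw t)
        + ew t ⬝ᵥ (M 0).mulVec (dw 0))
      ≤ 1/2 * (ew t ⬝ᵥ (M t).mulVec (ew t)) + (6*L^2 + 3*cstar^2) * (eu t ⬝ᵥ (M t).mulVec (eu t) + eu t ⬝ᵥ (A t).mulVec (eu t)) + 3 * (du t ⬝ᵥ (M t).mulVec (du t)) + 3 * (dw t ⬝ᵥ (M t).mulVec (dw t))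
        + 3 * (K2 * (dw 0 ⬝ᵥ (M 0).mulVec (dw 0))) := by
    linarith only [(abs_le.mp hb5).1, (abs_le.mp hb5).2, (abs_le.mp hb6).1, (abs_le.mp hb6).2,
      (abs_le.mp hb7).1, (abs_le.mp hb7).2, (abs_le.mp hb8).1, (abs_le.mp hb8).2,
      (abs_le.mp hb9).1, (abs_le.mp hb9).2, (abs_le.mp hb10).1, (abs_le.mp hb10).2, nn1]
  have GB3 : (- (eu' t ⬝ᵥ G t) + eu' t ⬝ᵥ (M t).mulVec (dw t)
        - eu' t ⬝ᵥ (M 0).mulVec (dw 0))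
      ≤ ρ₀/2 * (eu' t ⬝ᵥ (M t).mulVec (eu' t)) + 3/(2*ρ₀) * L^2 * (eu t ⬝ᵥ (M t).mulVec (eu t) + eu t ⬝ᵥ (A t).mulVec (eu t)) + 3/(2*ρ₀) * (dw t ⬝ᵥ (M t).mulVec (dw t))
        + 3/(2*ρ₀) * (K2 * (dw 0 ⬝ᵥ (M 0).mulVec (dw 0))) := by
    linarith only [(abs_le.mp hb11).1, (abs_le.mp hb11).2, (abs_le.mp hb12).1, (abs_le.mp hb12).2,
      (abs_le.mp hb13).1, (abs_le.mp hb13).2]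
  -- definitional links to the goal
  have l1 : kq (M t) (A t) (ew t) = ew t ⬝ᵥ (M t).mulVec (ew t) + ew t ⬝ᵥ (A t).mulVec (ew t) := rfl
  have l2 : kq (M t) (A t) (eu' t) = eu' t ⬝ᵥ (M t).mulVec (eu' t) + eu' t ⬝ᵥ (A t).mulVec (eu' t) := rfl
  have l3 : kq (M t) (A t) (eu t) = eu t ⬝ᵥ (M t).mulVec (eu t) + eu t ⬝ᵥ (A t).mulVec (eu t) := rfl
  have g1 : qf (M t) (du t) = du t ⬝ᵥ (M t).mulVec (du t) := rfl
  have g2 : qf (M t) (dw t) = dw t ⬝ᵥ (M t).mulVec (dw t) := rfl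
  have g3 : qf (M 0) (dw 0) = dw 0 ⬝ᵥ (M 0).mulVec (dw 0) := rfl
  rw [l1, l2, l3, g1, g2, g3, hid]
  have step := add_le_add_left (add_le_add (add_le_add GB1 GB2) GB3)
    (- (1/2) * (ew t ⬝ᵥ (M t).mulVec (ew t)) - (1/2) * (ew t ⬝ᵥ (A t).mulVec (ew t)))
  refine step.trans ?_
  linarith only [cf1, cf2, cf3, cf4, nn2, hAw]
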